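/- Let q ≥ 4 be even and h = (q−2)/2. Then the Möbius transformation (S·T)^{h−1} · S·T² fixes the point r = 1 − λ, i.e. ((S·T)^{h−1} S T²)·(1−λ) = 1−λ. -/

import Mathlib

/-!
With `θ = π / q` and `λ = 2 cos θ`, the powers of `S T = !![0, -1; 1, λ]` are given by Chebyshev
polynomials: `sin θ • (S T)^n` has entries `± sin ((n - 1) θ), ± sin (n θ), sin ((n + 1) θ)`.
For `q = 2k` we have `k θ = π / 2` and `h - 1 = k - 2`, so these sines become `cos 3θ, cos 2θ, cos θ`.
Expanding `cos 2θ` and `cos 3θ` in `c = cos θ` shows that `(1 - 2c, 1)` is an eigenvector of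
`sin θ • (S T)^(h-1) S T²` with eigenvalue `1 + c ≠ 0`, i.e. `1 - λ` is a fixed point.
-/

open Matrix Real

/-- The Möbius action of a real 2×2 matrix on ℝ. -/
noncomputable def moeb (A : Matrix (Fin 2) (Fin 2) ℝ) (x : ℝ) : ℝ :=
  (A 0 0 * x + A 0 1) / (A 1 0 * x + A 1 1)

theorem moeb_smul {a : ℝ} (ha : a ≠ 0) (A : Matrix (Fin 2) (Fin 2) ℝ) (x : ℝ) :
    moeb (a • A) x = moeb A x := by
  simp only [moeb, Matrix.smul_apply, smul_eq_mul]
  rw [← mul_div_mul_left (A 0 0 * x + A 0 1) _ ha]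
  ring_nf

theorem moeb_eq_self_of_mulVec_eq_smul {A : Matrix (Fin 2) (Fin 2) ℝ} {x c : ℝ} (hc : c ≠ 0)
    (h : A *ᵥ ![x, 1] = c • ![x, 1]) : moeb A x = x := by
  have h0 := congrFun h 0
  have h1 := congrFun h 1
  simp only [mulVec, dotProduct, Fin.sum_univ_two, cons_val_zero, cons_val_one, mul_one,
    Pi.smul_apply, smul_eq_mul] at h0 h1
  rw [moeb, h0, h1, mul_div_cancel_left₀ _ hc]

theorem sin_smul_pow_chebyshev (θ : ℝ) (n : ℕ) :
    sin θ • !![0, -1; 1, 2 * cos θ] ^ n =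
      !![-sin ((n - 1) * θ), -sin (n * θ); sin (n * θ), sin ((n + 1) * θ)] := by
  induction n with
  | zero => ext i j; fin_cases i <;> fin_cases j <;> simp
  | succ n ih =>
    rw [pow_succ, ← smul_mul, ih]
    have hsub : sin ((n - 1) * θ) = sin (n * θ) * cos θ - cos (n * θ) * sin θ := by
      rw [sub_one_mul, sin_sub]
    have hadd : sin ((n + 1) * θ) = sin (n * θ) * cos θ + cos (n * θ) * sin θ := by
      rw [add_one_mul, sin_add]
    have hadd2 : sin ((n + 1 + 1) * θ) = 2 * cos θ * sin ((n + 1) * θ) - sin (n * θ) := by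
      rw [add_one_mul, sin_add, hadd, add_one_mul, cos_add]
      linear_combination -sin (n * θ) * sin_sq_add_cos_sq θ
    ext i j
    fin_cases i <;> fin_cases j <;>
      simp [Matrix.mul_apply, Fin.sum_univ_two, hsub, hadd, hadd2] <;> ring

theorem sin_smul_pow_sub_two_of_mul_eq_pi_div_two {θ : ℝ} {k : ℕ} (hk : 2 ≤ k)
    (hkθ : k * θ = π / 2) :
    sin θ • !![0, -1; 1, 2 * cos θ] ^ (k - 2) =
      !![-cos (3 * θ), -cos (2 * θ); cos (2 * θ), cos θ] := by
  have sin_sub_mul : ∀ m : ℝ, sin ((k - m) * θ) = cos (m * θ) := fun m => by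
    rw [sub_mul, hkθ, sin_pi_div_two_sub]
  rw [sin_smul_pow_chebyshev, Nat.cast_sub hk, Nat.cast_two, sub_sub, sub_add,
    sin_sub_mul, sin_sub_mul, sin_sub_mul]
  norm_num

theorem inversion_mul_translation (l : ℝ) :
    !![0, -1; 1, 0] * !![1, l; 0, 1] = (!![0, -1; 1, l] : Matrix (Fin 2) (Fin 2) ℝ) := by
  ext i j; fin_cases i <;> fin_cases j <;> simp

theorem translation_sq (l : ℝ) :
    !![1, l; 0, 1] ^ 2 = (!![1, 2 * l; 0, 1] : Matrix (Fin 2) (Fin 2) ℝ) := by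
  ext i j; fin_cases i <;> fin_cases j <;> simp [sq, two_mul]

theorem mulVec_one_sub_two_cos_eq_smul (θ : ℝ) :
    (!![-cos (3 * θ), -cos (2 * θ); cos (2 * θ), cos θ] * !![0, -1; 1, 2 * (2 * cos θ)]) *ᵥ
      ![1 - 2 * cos θ, 1] = (1 + cos θ) • ![1 - 2 * cos θ, 1] := by
  ext i; fin_cases i <;>
    simp [cos_two_mul, cos_three_mul, mulVec, dotProduct, Fin.sum_univ_two] <;> ring

/-- Let q ≥ 4 be even and h = (q−2)/2. Then the Möbius transformation
(S·T)^{h−1} · S·T² fixes r = 1 − λ. -/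
theorem r_fixed_even (q : ℕ) (hq : 4 ≤ q) (hqe : Even q)
    (lam : ℝ) (hlam : lam = 2 * Real.cos (Real.pi / q))
    (S T : Matrix (Fin 2) (Fin 2) ℝ)
    (hS : S = !![0, -1; 1, 0]) (hT : T = !![1, lam; 0, 1])
    (h : ℕ) (hh : h = (q - 2) / 2) :
    moeb ((S * T) ^ (h - 1) * (S * T ^ 2)) (1 - lam) = 1 - lam := by
  obtain ⟨k, rfl⟩ := hqe
  set θ := π / ↑(k + k) with hθ
  have hθ_pos : 0 < θ := by positivity
  have hθ_le : θ ≤ π / 4 := by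
    rw [hθ]; gcongr; exact_mod_cast hq
  have hkθ : (k : ℝ) * θ = π / 2 := by
    have hk : (k : ℝ) ≠ 0 := Nat.cast_ne_zero.mpr (by omega)
    rw [hθ]; push_cast; field_simp; ring
  have hsin : sin θ ≠ 0 := (sin_pos_of_pos_of_lt_pi hθ_pos (by linarith [pi_pos])).ne'
  have hcos : 0 < cos θ := cos_pos_of_mem_Ioo ⟨by linarith, by linarith [pi_pos]⟩
  subst hS hT hlam hh
  rw [inversion_mul_translation, translation_sq, inversion_mul_translation,
    show (k + k - 2) / 2 - 1 = k - 2 by omega, ← moeb_smul hsin, ← smul_mul,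
    sin_smul_pow_sub_two_of_mul_eq_pi_div_two (by omega) hkθ]
  exact moeb_eq_self_of_mulVec_eq_smul (add_pos one_pos hcos).ne'
    (mulVec_one_sub_two_cos_eq_smul θ)
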